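/- arXiv:2411.00537 — 5 statements merged into one kernel-verified Lean document; each statement's English description precedes it below -/
import Mathlib

section
/- Let ∇ = Σ_{a=1}^n w_a·x^a·∂/∂x^a on an open convex neighborhood U of a point m ∈ ℝⁿ with x¹(m)·w₁ = 0. If g is smooth on U with ∇(g) = w·g, then the function f(x) = ∫_{x¹(m)}^{x¹} g(s, x², …, xⁿ) ds satisfies ∂f/∂x¹ = g, ∇(f) = (w + w₁)·f, and f(m) = 0. -/
open MeasureTheory Metric Set Function intervalIntegral


open MeasureTheory Metric Set Function intervalIntegral

noncomputable def pzero (n : ℕ) : (Fin (n+1) → ℝ) →L[ℝ] (Fin (n+1) → ℝ) :=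
  ContinuousLinearMap.pi fun a => if a = 0 then 0 else ContinuousLinearMap.proj a

lemma pzero_apply {n : ℕ} (x : Fin (n+1) → ℝ) (a : Fin (n+1)) :
    pzero n x a = if a = 0 then 0 else x a := by
  by_cases h : a = 0 <;> simp [pzero, h]

lemma pzero_eq_update {n : ℕ} (x : Fin (n+1) → ℝ) : pzero n x = Function.update x 0 0 := by
  ext a; by_cases h : a = 0 <;> simp [pzero_apply, Function.update_apply, h]

lemma update_eq_affine {n : ℕ} (x : Fin (n+1) → ℝ) (s : ℝ) :
    Function.update x 0 s = pzero n x + s • (Pi.single 0 1 : Fin (n+1) → ℝ) := by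
  ext a
  by_cases h : a = 0 <;> simp [pzero_apply, Function.update_apply, h, Pi.single_apply]

lemma hasFDerivAt_update0 {n : ℕ} (s : ℝ) (x : Fin (n+1) → ℝ) :
    HasFDerivAt (fun y : Fin (n+1) → ℝ => Function.update y 0 s) (pzero n) x := by
  have h : (fun y : Fin (n+1) → ℝ => Function.update y 0 s)
      = fun y => pzero n y + s • (Pi.single 0 1 : Fin (n+1) → ℝ) := funext fun y => update_eq_affine y s
  rw [h]
  exact (pzero n).hasFDerivAt.add_const _

lemma pzero_norm_le {n : ℕ} : ‖pzero n‖ ≤ 1 := by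
  refine ContinuousLinearMap.opNorm_le_bound _ zero_le_one fun x => ?_
  rw [one_mul]
  refine (pi_norm_le_iff_of_nonneg (norm_nonneg x)).2 fun a => ?_
  rw [pzero_apply]
  by_cases h : a = 0 <;> simp [h]
  · exact norm_le_pi_norm x a

lemma pzero_single_zero {n : ℕ} : pzero n (Pi.single 0 1) = 0 := by
  ext a; by_cases h : a = 0 <;> simp [pzero_apply, h, Pi.single_apply]

lemma pzero_single_succ {n : ℕ} (i : Fin n) :
    pzero n (Pi.single i.succ 1) = Pi.single i.succ 1 := by
  ext a
  by_cases h : a = 0 <;>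
    simp [pzero_apply, h, Pi.single_apply, (Fin.succ_ne_zero i).symm, eq_comm]

lemma intervalIntegral_clm_apply {H : Type*} [NormedAddCommGroup H] [NormedSpace ℝ H]
    {a b : ℝ} {T : ℝ → H →L[ℝ] ℝ} (hT : IntervalIntegrable T volume a b) (v : H) :
    (∫ s in a..b, T s) v = ∫ s in a..b, T s v := by
  simp only [intervalIntegral, ContinuousLinearMap.coe_sub', Pi.sub_apply]
  rw [ContinuousLinearMap.integral_apply hT.1, ContinuousLinearMap.integral_apply hT.2]

lemma abs_sub_le_of_uIcc {a b s : ℝ} (hs : s ∈ Set.uIcc a b) : |s - a| ≤ |b - a| := by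
  rcases Set.mem_uIcc.mp hs with ⟨h1, h2⟩ | ⟨h1, h2⟩
  · rw [abs_of_nonneg (by linarith), abs_of_nonneg (by linarith)]; linarith
  · rw [abs_of_nonpos (by linarith), abs_of_nonpos (by linarith)]; linarith

/-- Homogeneous antiderivative (even case): on a convex open neighbourhood `U`
of `m` in which segments in the first coordinate stay in `U`, if
`w₁ · x¹(m) = 0` and `∇g = w·g`, where `∇ = Σ_a w_a x^a ∂/∂x^a`, then
`f(x) = ∫_{x¹(m)}^{x¹} g(s, x², …) ds` satisfies `∂f/∂x¹ = g`,
`∇f = (w + w₁)·f` and `f(m) = 0`. -/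
theorem stmt7 (n : ℕ) (wts : Fin (n + 1) → ℝ) (U : Set (Fin (n + 1) → ℝ))
    (hU : IsOpen U) (hconv : Convex ℝ U) (m : Fin (n + 1) → ℝ) (hm : m ∈ U)
    (hseg : ∀ x ∈ U, ∀ s ∈ Set.uIcc (m 0) (x 0), Function.update x 0 s ∈ U)
    (hw1 : wts 0 * m 0 = 0)
    (g : (Fin (n + 1) → ℝ) → ℝ) (hg : ContDiffOn ℝ (⊤ : ℕ∞) g U) (w : ℝ)
    (hgh : ∀ x ∈ U, ∑ a, wts a * x a * fderiv ℝ g x (Pi.single a 1) = w * g x)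
    (f : (Fin (n + 1) → ℝ) → ℝ)
    (hfdef : ∀ x, f x = ∫ s in (m 0)..(x 0), g (Function.update x 0 s)) :
    (∀ x ∈ U, fderiv ℝ f x (Pi.single 0 1) = g x) ∧
    (∀ x ∈ U, ∑ a, wts a * x a * fderiv ℝ f x (Pi.single a 1) = (w + wts 0) * f x) ∧
    f m = 0 := by
  have hgc : ContinuousOn g U := hg.continuousOn
  have hg' : ContinuousOn (fderiv ℝ g) U := hg.continuousOn_fderiv_of_isOpen hU (by simp)
  have hdiff : ∀ y ∈ U, DifferentiableAt ℝ g y := fun y hy =>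
    (hg.contDiffAt (hU.mem_nhds hy)).differentiableAt (by simp)
  have hcont_e : Continuous (fun q : (Fin (n+1) → ℝ) × ℝ => Function.update q.1 0 q.2) := by
    have h : (fun q : (Fin (n+1) → ℝ) × ℝ => Function.update q.1 0 q.2)
        = fun q => pzero n q.1 + q.2 • (Pi.single 0 1 : Fin (n+1) → ℝ) :=
      funext fun q => update_eq_affine q.1 q.2
    rw [h]
    exact ((pzero n).continuous.comp continuous_fst).add (continuous_snd.smul continuous_const)
  have hpath_cont : ∀ x : Fin (n+1) → ℝ,
      Continuous (fun s : ℝ => Function.update x 0 s) := fun x =>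
    hcont_e.comp (continuous_const.prodMk continuous_id)
  have hcontPath : ∀ (x : Fin (n+1) → ℝ) (I : Set ℝ), (∀ s ∈ I, Function.update x 0 s ∈ U) →
      ContinuousOn (fun s => g (Function.update x 0 s)) I := fun x I hI =>
    hgc.comp (hpath_cont x).continuousOn hI
  have hcontPath' : ∀ (x : Fin (n+1) → ℝ) (I : Set ℝ), (∀ s ∈ I, Function.update x 0 s ∈ U) →
      ContinuousOn (fun s => (fderiv ℝ g (Function.update x 0 s)).comp (pzero n)) I :=
    fun x I hI =>
    (hg'.comp (hpath_cont x).continuousOn hI).clm_comp continuousOn_const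
  -- the key derivative
  have key : ∀ p ∈ U, HasFDerivAt f
      ((∫ s in (m 0)..(p 0), (fderiv ℝ g (Function.update p 0 s)).comp (pzero n)) +
        g p • ContinuousLinearMap.proj 0) p := by
    intro p hp
    -- find δ
    have hSc : IsCompact ((fun s => Function.update p 0 s) '' Set.uIcc (m 0) (p 0)) :=
      isCompact_uIcc.image (hpath_cont p)
    have hSU : ((fun s => Function.update p 0 s) '' Set.uIcc (m 0) (p 0)) ⊆ U := by
      rintro - ⟨s, hs, rfl⟩; exact hseg p hp s hs
    obtain ⟨δ, hδpos, hδU⟩ := hSc.exists_cthickening_subset_open hU hSU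
    have hmemU : ∀ y : Fin (n+1) → ℝ, dist y p ≤ δ → ∀ s : ℝ,
        (s ∈ Set.uIcc (m 0) (p 0) ∨ |s - p 0| ≤ δ) → Function.update y 0 s ∈ U := by
      intro y hy s hs
      apply hδU
      rcases hs with hs | hs
      · refine mem_cthickening_of_dist_le _ (Function.update p 0 s) δ _ ⟨s, hs, rfl⟩ ?_
        refine le_trans ?_ hy
        refine (dist_pi_le_iff dist_nonneg).2 fun a => ?_
        by_cases h : a = 0
        · subst h; simpa using dist_nonneg
        · rw [Function.update_of_ne h, Function.update_of_ne h]
          exact dist_le_pi_dist y p a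
      · refine mem_cthickening_of_dist_le _ p δ _ ⟨p 0, Set.right_mem_uIcc, Function.update_eq_self 0 p⟩ ?_
        refine (dist_pi_le_iff hδpos.le).2 fun a => ?_
        by_cases h : a = 0
        · subst h; rw [Function.update_self]; rwa [Real.dist_eq]
        · rw [Function.update_of_ne h]
          exact le_trans (dist_le_pi_dist y p a) hy
    -- bound on the derivative on a compact neighbourhood
    have hKc : IsCompact ((fun q : (Fin (n+1) → ℝ) × ℝ => Function.update q.1 0 q.2) ''
        (closedBall p δ ×ˢ Set.uIcc (m 0) (p 0))) :=
      ((isCompact_closedBall p δ).prod isCompact_uIcc).image hcont_e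
    have hKU : ((fun q : (Fin (n+1) → ℝ) × ℝ => Function.update q.1 0 q.2) ''
        (closedBall p δ ×ˢ Set.uIcc (m 0) (p 0))) ⊆ U := by
      rintro - ⟨⟨y, s⟩, ⟨hy, hs⟩, rfl⟩
      exact hmemU y (mem_closedBall.mp hy) s (Or.inl hs)
    obtain ⟨C, hC⟩ := hKc.exists_bound_of_continuousOn (hg'.mono hKU)
    -- derivative of the fixed-endpoint part
    have h1 : HasFDerivAt (fun x => ∫ s in (m 0)..(p 0), g (Function.update x 0 s))
        (∫ s in (m 0)..(p 0), (fderiv ℝ g (Function.update p 0 s)).comp (pzero n)) p := by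
      refine hasFDerivAt_integral_of_dominated_of_fderiv_le (bound := fun _ => C)
        (F' := fun x s => (fderiv ℝ g (Function.update x 0 s)).comp (pzero n)) (ball_mem_nhds p hδpos) ?_ ?_ ?_ ?_ ?_ ?_
      · filter_upwards [ball_mem_nhds p hδpos] with x hx
        refine ContinuousOn.aestronglyMeasurable ?_ measurableSet_uIoc
        exact (hcontPath x _ fun s hs => hmemU x (mem_ball.mp hx).le s (Or.inl hs)).mono
          Set.uIoc_subset_uIcc
      · exact (hcontPath p _ fun s hs => hseg p hp s hs).intervalIntegrable
      · refine ContinuousOn.aestronglyMeasurable ?_ measurableSet_uIoc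
        exact (hcontPath' p _ fun s hs => hseg p hp s hs).mono Set.uIoc_subset_uIcc
      · refine Filter.Eventually.of_forall fun t ht x hx => ?_
        have hyK := Set.mem_image_of_mem
          (fun q : (Fin (n+1) → ℝ) × ℝ => Function.update q.1 0 q.2)
          (Set.mk_mem_prod (ball_subset_closedBall hx) (Set.uIoc_subset_uIcc ht))
        calc ‖(fderiv ℝ g (Function.update x 0 t)).comp (pzero n)‖
            ≤ ‖fderiv ℝ g (Function.update x 0 t)‖ * ‖pzero n‖ :=
              ContinuousLinearMap.opNorm_comp_le _ _
          _ ≤ C * 1 := mul_le_mul (hC _ hyK) pzero_norm_le (norm_nonneg _)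
              (le_trans (norm_nonneg _) (hC _ hyK))
          _ = C := mul_one C
      · exact intervalIntegrable_const
      · refine Filter.Eventually.of_forall fun t ht x hx => ?_
        have hyU : Function.update x 0 t ∈ U :=
          hmemU x (mem_ball.mp hx).le t (Or.inl (Set.uIoc_subset_uIcc ht))
        exact ((hdiff _ hyU).hasFDerivAt.comp x (hasFDerivAt_update0 t x))
    -- derivative of the moving-endpoint part
    have h2 : HasFDerivAt (fun x => ∫ s in (p 0)..(x 0), g (Function.update x 0 s))
        (g p • (ContinuousLinearMap.proj 0 : (Fin (n+1) → ℝ) →L[ℝ] ℝ)) p := by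
      rw [hasFDerivAt_iff_isLittleO, Asymptotics.isLittleO_iff]
      intro c hc
      have hcontAt : ContinuousAt (fun q : (Fin (n+1) → ℝ) × ℝ => g (Function.update q.1 0 q.2))
          (p, p 0) := by
        have hpU : Function.update p 0 (p 0) ∈ U := by rw [Function.update_eq_self]; exact hp
        exact ContinuousAt.comp (g := g)
          (f := fun q : (Fin (n+1) → ℝ) × ℝ => Function.update q.1 0 q.2)
          (hgc.continuousAt (hU.mem_nhds hpU)) hcont_e.continuousAt
      obtain ⟨r, hr, hball⟩ := Metric.continuousAt_iff.mp hcontAt c hc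
      filter_upwards [ball_mem_nhds p (lt_min hr hδpos)] with x hx
      have hx0 : |x 0 - p 0| ≤ dist x p := by
        rw [← Real.dist_eq]; exact dist_le_pi_dist x p 0
      have hxr : dist x p < min r δ := mem_ball.mp hx
      have hsU : ∀ s ∈ Set.uIcc (p 0) (x 0), Function.update x 0 s ∈ U := by
        intro s hs
        refine hmemU x (hxr.le.trans (min_le_right _ _)) s (Or.inr ?_)
        exact le_trans (abs_sub_le_of_uIcc hs) (hx0.trans (hxr.le.trans (min_le_right _ _)))
      have hint : IntervalIntegrable (fun s => g (Function.update x 0 s)) volume (p 0) (x 0) :=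
        (hcontPath x _ hsU).intervalIntegrable
      have hconst : ((g p • ContinuousLinearMap.proj 0 :
          (Fin (n+1) → ℝ) →L[ℝ] ℝ) (x - p)) = (x 0 - p 0) * g p := by
        simp [ContinuousLinearMap.proj_apply, mul_comm]
      have hconst2 : (x 0 - p 0) * g p = ∫ _ in (p 0)..(x 0), g p := by
        rw [intervalIntegral.integral_const, smul_eq_mul]
      rw [intervalIntegral.integral_same, sub_zero, hconst, hconst2,
        ← intervalIntegral.integral_sub hint intervalIntegrable_const]
      have hbound : ∀ s ∈ Set.uIoc (p 0) (x 0), ‖g (Function.update x 0 s) - g p‖ ≤ c := by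
        intro s hs
        have hs' : |s - p 0| ≤ |x 0 - p 0| := abs_sub_le_of_uIcc (Set.uIoc_subset_uIcc hs)
        have hd : dist ((x, s)) ((p, p 0)) < r := by
          rw [Prod.dist_eq]
          refine max_lt (hxr.trans_le (min_le_left _ _)) ?_
          rw [Real.dist_eq]
          exact lt_of_le_of_lt (hs'.trans hx0) (hxr.trans_le (min_le_left _ _))
        have := hball hd
        rw [Function.update_eq_self] at this
        rw [Real.dist_eq] at this
        exact this.le
      calc ‖∫ s in (p 0)..(x 0), (g (Function.update x 0 s) - g p)‖
          ≤ c * |x 0 - p 0| := intervalIntegral.norm_integral_le_of_norm_le_const hbound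
        _ ≤ c * ‖x - p‖ := by
            refine mul_le_mul_of_nonneg_left ?_ hc.le
            have : |(x - p) 0| ≤ ‖x - p‖ := by
              rw [← Real.norm_eq_abs]; exact norm_le_pi_norm (x - p) 0
            simpa using this
    -- f eventually equals the sum
    have heq : f =ᶠ[nhds p] fun x => (∫ s in (m 0)..(p 0), g (Function.update x 0 s)) +
        ∫ s in (p 0)..(x 0), g (Function.update x 0 s) := by
      filter_upwards [ball_mem_nhds p hδpos] with x hx
      have hi1 : IntervalIntegrable (fun s => g (Function.update x 0 s)) volume (m 0) (p 0) :=
        (hcontPath x _ fun s hs => hmemU x (mem_ball.mp hx).le s (Or.inl hs)).intervalIntegrable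
      have hi2 : IntervalIntegrable (fun s => g (Function.update x 0 s)) volume (p 0) (x 0) := by
        refine (hcontPath x _ fun s hs => hmemU x (mem_ball.mp hx).le s (Or.inr ?_)).intervalIntegrable
        have hx0 : |x 0 - p 0| ≤ dist x p := by
          rw [← Real.dist_eq]; exact dist_le_pi_dist x p 0
        exact le_trans (abs_sub_le_of_uIcc hs) (hx0.trans (mem_ball.mp hx).le)
      rw [hfdef x, ← intervalIntegral.integral_add_adjacent_intervals hi1 hi2]
    exact (h1.add h2).congr_of_eventuallyEq heq
  have hTint : ∀ x ∈ U, IntervalIntegrable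
      (fun s => (fderiv ℝ g (Function.update x 0 s)).comp (pzero n)) volume (m 0) (x 0) :=
    fun x hx => (hcontPath' x _ (hseg x hx)).intervalIntegrable
  have hfderiv : ∀ x ∈ U, fderiv ℝ f x =
      (∫ s in (m 0)..(x 0), (fderiv ℝ g (Function.update x 0 s)).comp (pzero n)) +
        g x • ContinuousLinearMap.proj 0 := fun x hx => (key x hx).fderiv
  have hpart1 : ∀ x ∈ U, fderiv ℝ f x (Pi.single 0 1) = g x := by
    intro x hx
    rw [hfderiv x hx, ContinuousLinearMap.add_apply, intervalIntegral_clm_apply (hTint x hx)]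
    simp [pzero_single_zero, Pi.single_eq_same]
  have hpart2a : ∀ x ∈ U, ∀ i : Fin n, fderiv ℝ f x (Pi.single i.succ 1) =
      ∫ s in (m 0)..(x 0), fderiv ℝ g (Function.update x 0 s) (Pi.single i.succ 1) := by
    intro x hx i
    rw [hfderiv x hx, ContinuousLinearMap.add_apply, intervalIntegral_clm_apply (hTint x hx)]
    simp [pzero_single_succ, Pi.single_eq_of_ne (Fin.succ_ne_zero i),
      Pi.single_eq_of_ne (Fin.succ_ne_zero i).symm]
  have hpart2 : ∀ x ∈ U, ∑ a, wts a * x a * fderiv ℝ f x (Pi.single a 1) = (w + wts 0) * f x := by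
    intro x hx
    have hyU : ∀ s ∈ Set.uIcc (m 0) (x 0), Function.update x 0 s ∈ U := hseg x hx
    have hgcont : ContinuousOn (fun s => g (Function.update x 0 s)) (Set.uIcc (m 0) (x 0)) :=
      hcontPath x _ hyU
    have hdacont : ∀ v : Fin (n+1) → ℝ, ContinuousOn
        (fun s => fderiv ℝ g (Function.update x 0 s) v) (Set.uIcc (m 0) (x 0)) := fun v =>
      (hg'.comp (hpath_cont x).continuousOn hyU).clm_apply continuousOn_const
    have hderiv : ∀ s ∈ Set.uIcc (m 0) (x 0), HasDerivAt (fun s => g (Function.update x 0 s))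
        (fderiv ℝ g (Function.update x 0 s) (Pi.single 0 1)) s := by
      intro s hs
      have hpathd : HasDerivAt (fun s : ℝ => Function.update x 0 s)
          (Pi.single 0 1 : Fin (n+1) → ℝ) s := by
        have h : (fun s : ℝ => Function.update x 0 s)
            = fun s => pzero n x + s • (Pi.single 0 1 : Fin (n+1) → ℝ) :=
          funext fun s => update_eq_affine x s
        rw [h]
        simpa using
          ((hasDerivAt_id s).smul_const (Pi.single 0 1 : Fin (n+1) → ℝ)).const_add (pzero n x)
      exact (hdiff _ (hyU s hs)).hasFDerivAt.comp_hasDerivAt s hpathd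
    have hibp : (∫ s in (m 0)..(x 0), s * fderiv ℝ g (Function.update x 0 s) (Pi.single 0 1)) =
        x 0 * g x - m 0 * g (Function.update x 0 (m 0)) -
          ∫ s in (m 0)..(x 0), g (Function.update x 0 s) := by
      have h := intervalIntegral.integral_mul_deriv_eq_deriv_mul (u := fun s => s)
        (u' := fun _ => (1:ℝ)) (v := fun s => g (Function.update x 0 s))
        (v' := fun s => fderiv ℝ g (Function.update x 0 s) (Pi.single 0 1))
        (fun s _ => hasDerivAt_id s) hderiv intervalIntegrable_const
        (hdacont _).intervalIntegrable
      simpa [Function.update_eq_self, one_mul] using h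
    have hpw : Set.EqOn
        (fun s => ∑ i : Fin n, wts i.succ * x i.succ *
          fderiv ℝ g (Function.update x 0 s) (Pi.single i.succ 1))
        (fun s => w * g (Function.update x 0 s) -
          wts 0 * (s * fderiv ℝ g (Function.update x 0 s) (Pi.single 0 1)))
        (Set.uIcc (m 0) (x 0)) := by
      intro s hs
      have h := hgh _ (hyU s hs)
      rw [Fin.sum_univ_succ] at h
      have h0 : Function.update x 0 s 0 = s := Function.update_self 0 s x
      have hsucc : ∀ i : Fin n, Function.update x 0 s i.succ = x i.succ := fun i =>
        Function.update_of_ne (Fin.succ_ne_zero i) s x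
      simp only [h0, hsucc] at h
      simp only
      linarith
    have hsumint : ∀ i : Fin n, IntervalIntegrable (fun s => wts i.succ * x i.succ *
        fderiv ℝ g (Function.update x 0 s) (Pi.single i.succ 1)) volume (m 0) (x 0) := fun i =>
      (continuousOn_const.mul (hdacont _)).intervalIntegrable
    rw [Fin.sum_univ_succ, hpart1 x hx]
    have hsum : ∑ i : Fin n, wts i.succ * x i.succ * fderiv ℝ f x (Pi.single i.succ 1)
        = ∫ s in (m 0)..(x 0), ∑ i : Fin n, wts i.succ * x i.succ *
            fderiv ℝ g (Function.update x 0 s) (Pi.single i.succ 1) := by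
      rw [intervalIntegral.integral_finset_sum (fun i _ => hsumint i)]
      exact Finset.sum_congr rfl fun i _ => by
        rw [hpart2a x hx i, intervalIntegral.integral_const_mul]
    have hint1 : IntervalIntegrable (fun s => w * g (Function.update x 0 s)) volume
        (m 0) (x 0) := (continuousOn_const.mul hgcont).intervalIntegrable
    have hint2 : IntervalIntegrable (fun s => wts 0 *
        (s * fderiv ℝ g (Function.update x 0 s) (Pi.single 0 1))) volume (m 0) (x 0) :=
      (continuousOn_const.mul (continuousOn_id.mul (hdacont _))).intervalIntegrable
    rw [hsum, intervalIntegral.integral_congr hpw,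
      intervalIntegral.integral_sub hint1 hint2,
      intervalIntegral.integral_const_mul, intervalIntegral.integral_const_mul, hibp,
      ← hfdef x]
    linear_combination g (Function.update x 0 (m 0)) * hw1
  exact ⟨hpart1, hpart2, by rw [hfdef m, intervalIntegral.integral_same]⟩
end

section
/- Let ∇ = Σ_{a} w_a·x^a·∂/∂x^a on ℝⁿ with all weights w_a > 0. If f is a smooth function on a neighborhood of 0 with ∇(f) = w·f for some w < 0, then f = 0 on a neighborhood of 0. -/
/-- If all the weights `w_a` of `∇ = Σ_a w_a x^a ∂/∂x^a` are positive and `f`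
is smooth near `0` with `∇f = w·f` for some `w < 0`, then `f = 0` near `0`. -/
theorem stmt9 (n : ℕ) (wts : Fin n → ℝ) (hw : ∀ a, 0 < wts a)
    (U : Set (Fin n → ℝ)) (hU : IsOpen U) (h0 : (0 : Fin n → ℝ) ∈ U)
    (f : (Fin n → ℝ) → ℝ) (hf : ContDiffOn ℝ (⊤ : ℕ∞) f U) (w : ℝ) (hwneg : w < 0)
    (hfh : ∀ x ∈ U, ∑ a, wts a * x a * fderiv ℝ f x (Pi.single a 1) = w * f x) :
    ∃ V : Set (Fin n → ℝ), IsOpen V ∧ (0 : Fin n → ℝ) ∈ V ∧ ∀ x ∈ V, f x = 0 := by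
  obtain ⟨r, hr, hball⟩ := Metric.isOpen_iff.1 hU 0 h0
  refine ⟨Metric.ball 0 r, Metric.isOpen_ball, Metric.mem_ball_self hr, ?_⟩
  intro x hx
  set c : ℝ → (Fin n → ℝ) := fun t a => t ^ (wts a) * x a with hc
  have hmem : ∀ t ∈ Set.Ioc (0:ℝ) 1, c t ∈ U := by
    intro t ht
    apply hball
    rw [Metric.mem_ball] at hx ⊢
    refine lt_of_le_of_lt ?_ hx
    refine (dist_pi_le_iff dist_nonneg).2 fun a => ?_
    have h1 : dist (c t a) 0 = t ^ (wts a) * |x a| := by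
      simp [hc, Real.dist_eq, abs_mul,
        abs_of_nonneg (Real.rpow_nonneg ht.1.le (wts a))]
    have h2 : t ^ (wts a) ≤ 1 := Real.rpow_le_one ht.1.le ht.2 (hw a).le
    calc dist (c t a) 0 ≤ 1 * |x a| := by
          rw [h1]; exact mul_le_mul_of_nonneg_right h2 (abs_nonneg _)
      _ = dist (x a) 0 := by simp [Real.dist_eq]
      _ ≤ dist x 0 := dist_le_pi_dist x 0 a
  have hdf : ∀ t ∈ Set.Ioc (0:ℝ) 1, DifferentiableAt ℝ f (c t) := fun t ht =>
    (hf.contDiffAt (hU.mem_nhds (hmem t ht))).differentiableAt (by simp)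
  -- the key derivative computation
  have key : ∀ t ∈ Set.Ioc (0:ℝ) 1,
      HasDerivAt (fun s => s ^ (-w) * f (c s)) 0 t := by
    intro t ht
    have ht0 : t ≠ 0 := ht.1.ne'
    have hc' : HasDerivAt c (fun a => wts a * t ^ (wts a - 1) * x a) t := by
      rw [hasDerivAt_pi]
      intro a
      exact (Real.hasDerivAt_rpow_const (Or.inl ht0)).mul_const (x a)
    have hcomp : HasDerivAt (fun s => f (c s))
        (fderiv ℝ f (c t) (fun a => wts a * t ^ (wts a - 1) * x a)) t :=
      (hdf t ht).hasFDerivAt.comp_hasDerivAt t hc'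
    have hv : (fun a => wts a * t ^ (wts a - 1) * x a)
        = ∑ a, (wts a * t ^ (wts a - 1) * x a) • (Pi.single a 1 : Fin n → ℝ) := by
      funext j
      simp [Pi.single_apply, Finset.sum_apply]
    have hDval : fderiv ℝ f (c t) (fun a => wts a * t ^ (wts a - 1) * x a)
        = w * f (c t) / t := by
      rw [hv, map_sum]
      have hsum : ∀ a : Fin n,
          (fderiv ℝ f (c t)) ((wts a * t ^ (wts a - 1) * x a) • (Pi.single a 1 : Fin n → ℝ))
          = (wts a * (c t a) * fderiv ℝ f (c t) (Pi.single a 1)) / t := by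
        intro a
        rw [map_smul]
        have : t ^ (wts a - 1) = t ^ (wts a) / t := Real.rpow_sub_one ht0 _
        simp only [smul_eq_mul, hc, this]
        ring
      rw [Finset.sum_congr rfl fun a _ => hsum a, ← Finset.sum_div,
        hfh (c t) (hmem t ht)]
    have hpow : HasDerivAt (fun s : ℝ => s ^ (-w)) (-w * t ^ (-w - 1)) t :=
      Real.hasDerivAt_rpow_const (Or.inl ht0)
    have := hpow.mul hcomp
    rw [hDval] at this
    refine this.congr_deriv ?_
    rw [Real.rpow_sub_one ht0]
    field_simp
    ring
  -- the function is constant on (0,1)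
  have hc1 : c 1 = x := by funext a; simp [hc]
  have hconst : ∀ s ∈ Set.Ioo (0:ℝ) 1, s ^ (-w) * f (c s) = f x := by
    intro s hs
    obtain ⟨ξ, hξ, hslope⟩ := exists_hasDerivAt_eq_slope
      (fun u => u ^ (-w) * f (c u)) (fun _ => 0) hs.2
      (fun u hu => (key u ⟨lt_of_lt_of_le hs.1 hu.1, hu.2⟩).continuousAt.continuousWithinAt)
      (fun u hu => key u ⟨lt_trans hs.1 hu.1, hu.2.le⟩)
    have h0' : (1:ℝ) ^ (-w) * f (c 1) - s ^ (-w) * f (c s) = 0 := by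
      rcases div_eq_zero_iff.1 hslope.symm with h | h
      · exact h
      · exact absurd h (by linarith [hs.2])
    rw [hc1, Real.one_rpow, one_mul] at h0'
    linarith
  -- take the limit s → 0⁺
  have hne : (nhdsWithin (0:ℝ) (Set.Ioi 0)).NeBot := nhdsGT_neBot 0
  have h1 : Filter.Tendsto (fun s => s ^ (-w) * f (c s))
      (nhdsWithin (0:ℝ) (Set.Ioi 0)) (nhds (f x)) := by
    apply Filter.Tendsto.congr' _ tendsto_const_nhds
    filter_upwards [Ioo_mem_nhdsGT_of_mem (by norm_num : (0:ℝ) ∈ Set.Ico (0:ℝ) 1)]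
      with s hs
    exact (hconst s hs).symm
  have hpowlim : Filter.Tendsto (fun s : ℝ => s ^ (-w))
      (nhdsWithin (0:ℝ) (Set.Ioi 0)) (nhds 0) := by
    have := (Real.continuousAt_rpow_const 0 (-w) (Or.inr (by linarith : (0:ℝ) ≤ -w))).tendsto
    rw [Real.zero_rpow (by linarith : -w ≠ 0)] at this
    exact this.mono_left nhdsWithin_le_nhds
  have hclim : Filter.Tendsto c (nhdsWithin (0:ℝ) (Set.Ioi 0)) (nhds 0) := by
    rw [tendsto_pi_nhds]
    intro a
    have := ((Real.continuousAt_rpow_const 0 (wts a) (Or.inr (hw a).le)).tendsto.mono_left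
      (nhdsWithin_le_nhds : nhdsWithin (0:ℝ) (Set.Ioi 0) ≤ nhds 0)).mul_const (x a)
    rw [Real.zero_rpow (hw a).ne', zero_mul] at this
    simpa [hc] using this
  have hflim : Filter.Tendsto (fun s => f (c s))
      (nhdsWithin (0:ℝ) (Set.Ioi 0)) (nhds (f 0)) :=
    (((hf.contDiffAt (hU.mem_nhds h0)).differentiableAt (by simp)).continuousAt.tendsto).comp hclim
  have h2 : Filter.Tendsto (fun s => s ^ (-w) * f (c s))
      (nhdsWithin (0:ℝ) (Set.Ioi 0)) (nhds 0) := by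
    have := hpowlim.mul hflim
    rwa [zero_mul] at this
  exact tendsto_nhds_unique h1 h2
end

section
/- Let ∇ = Σ_a w_a·x^a·∂/∂x^a on ℝⁿ with all w_a > 0, and let f be smooth on a neighborhood of 0 with ∇(f) = w·f and w ∉ { Σ_a n_a·w_a : n_a ∈ ℕ }. Then f = 0 near 0. -/
open Metric Real Filter Set Topology
open scoped ContDiff

lemma clm_decomp {n : ℕ} (L : (Fin n → ℝ) →L[ℝ] ℝ) (v : Fin n → ℝ) :
    L v = ∑ a, v a * L (Pi.single a 1) := by
  have hv : v = ∑ a, v a • (Pi.single a (1:ℝ) : Fin n → ℝ) := by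
    funext i
    simp [Finset.sum_apply, Pi.single_apply]
  calc L v = L (∑ a, v a • (Pi.single a (1:ℝ) : Fin n → ℝ)) := by rw [← hv]
    _ = ∑ a, v a * L (Pi.single a 1) := by
        rw [map_sum]; simp [smul_eq_mul]

lemma flow_zero {n : ℕ} (wts : Fin n → ℝ) (hw : ∀ a, 0 < wts a)
    (U : Set (Fin n → ℝ)) (hU : IsOpen U) (r : ℝ) (hrU : ball 0 r ⊆ U)
    (lam : ℝ) (hlam : lam < 0)
    (g : (Fin n → ℝ) → ℝ) (hg : ContDiffOn ℝ ∞ g U)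
    (heq : ∀ x ∈ U, ∑ a, wts a * x a * fderiv ℝ g x (Pi.single a 1) = lam * g x)
    {x : Fin n → ℝ} (hx : x ∈ ball 0 r) : g x = 0 := by
  have hr : 0 < r := lt_of_le_of_lt (by positivity) (mem_ball_zero_iff.1 hx)
  set c : ℝ → (Fin n → ℝ) := fun t a => Real.exp (wts a * t) * x a with hc_def
  have hc_mem : ∀ t ≤ (0:ℝ), c t ∈ ball (0 : Fin n → ℝ) r := by
    intro t ht
    rw [mem_ball_zero_iff, pi_norm_lt_iff hr]
    intro a
    have h1 : Real.exp (wts a * t) ≤ 1 :=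
      Real.exp_le_one_iff.2 (mul_nonpos_of_nonneg_of_nonpos (hw a).le ht)
    have h2 : ‖x a‖ ≤ ‖x‖ := norm_le_pi_norm x a
    have h3 : ‖x‖ < r := mem_ball_zero_iff.1 hx
    calc ‖c t a‖ = Real.exp (wts a * t) * |x a| := by
          simp [hc_def, abs_mul, abs_of_pos (Real.exp_pos _), Real.norm_eq_abs]
      _ ≤ 1 * |x a| := by gcongr
      _ = ‖x a‖ := by simp [Real.norm_eq_abs]
      _ ≤ ‖x‖ := h2
      _ < r := h3
  have hdiffg : ∀ t ≤ (0:ℝ), DifferentiableAt ℝ g (c t) := fun t ht =>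
    ((hg.contDiffAt (hU.mem_nhds (hrU (hc_mem t ht)))).differentiableAt (by simp))
  have hderiv : ∀ t ≤ (0:ℝ),
      HasDerivAt (fun t => Real.exp (-lam * t) * g (c t)) 0 t := by
    intro t ht
    have hc' : HasDerivAt c (fun a => wts a * Real.exp (wts a * t) * x a) t := by
      rw [hasDerivAt_pi]
      intro a
      have h1 : HasDerivAt (fun t : ℝ => wts a * t) (wts a) t := by
        simpa using (hasDerivAt_id t).const_mul (wts a)
      have h2 := (h1.exp).mul_const (x a)
      exact h2.congr_deriv (by ring)
    have hgc : HasDerivAt (fun t => g (c t))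
        (fderiv ℝ g (c t) (fun a => wts a * Real.exp (wts a * t) * x a)) t :=
      (hdiffg t ht).hasFDerivAt.comp_hasDerivAt t hc'
    have hval : fderiv ℝ g (c t) (fun a => wts a * Real.exp (wts a * t) * x a)
        = lam * g (c t) := by
      rw [clm_decomp]
      rw [← heq (c t) (hrU (hc_mem t ht))]
      apply Finset.sum_congr rfl
      intro a _
      have hca : c t a = rexp (wts a * t) * x a := rfl
      rw [hca]
      ring
    rw [hval] at hgc
    have hexp : HasDerivAt (fun t : ℝ => Real.exp (-lam * t)) (-lam * Real.exp (-lam * t)) t := by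
      have h1 : HasDerivAt (fun t : ℝ => -lam * t) (-lam) t := by
        simpa using (hasDerivAt_id t).const_mul (-lam)
      simpa [mul_comm] using h1.exp
    have := hexp.mul hgc
    exact this.congr_deriv (by ring)
  have hconst : ∀ t ≤ (0:ℝ), Real.exp (-lam * t) * g (c t) = g x := by
    intro t ht
    have key := constant_of_has_deriv_right_zero
      (f := fun t => Real.exp (-lam * t) * g (c t)) (a := t) (b := 0)
      (fun s hs => ((hderiv s hs.2).continuousAt).continuousWithinAt)
      (fun s hs => ((hderiv s hs.2.le).hasDerivWithinAt))
    have h0 := key 0 (right_mem_Icc.2 ht)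
    have hc0 : c 0 = x := by funext a; simp [hc_def]
    rw [hc0] at h0
    simpa using h0.symm
  -- limit as t → -∞
  have texp : Tendsto (fun t : ℝ => Real.exp (-lam * t)) atBot (𝓝 0) :=
    Real.tendsto_exp_atBot.comp (Tendsto.const_mul_atBot (by linarith) tendsto_id)
  have tc : Tendsto c atBot (𝓝 (0 : Fin n → ℝ)) := by
    rw [tendsto_pi_nhds]
    intro a
    have : Tendsto (fun t : ℝ => Real.exp (wts a * t)) atBot (𝓝 0) :=
      Real.tendsto_exp_atBot.comp (Tendsto.const_mul_atBot (hw a) tendsto_id)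
    simpa using this.mul_const (x a)
  have hgcont : ContinuousAt g 0 :=
    ((hg.contDiffAt (hU.mem_nhds (hrU (mem_ball_self hr)))).continuousAt)
  have tg : Tendsto (fun t => g (c t)) atBot (𝓝 (g 0)) := hgcont.tendsto.comp tc
  have tprod : Tendsto (fun t => Real.exp (-lam * t) * g (c t)) atBot (𝓝 0) := by
    simpa using texp.mul tg
  have tconst : Tendsto (fun _ : ℝ => g x) atBot (𝓝 0) := by
    apply tprod.congr'
    filter_upwards [eventually_le_atBot (0:ℝ)] with t ht
    exact hconst t ht
  exact (tendsto_nhds_unique tendsto_const_nhds tconst)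

lemma key_zero {n : ℕ} (wts : Fin n → ℝ) (hw : ∀ a, 0 < wts a)
    (U : Set (Fin n → ℝ)) (hU : IsOpen U) (r : ℝ) (hr : 0 < r) (hrU : ball 0 r ⊆ U)
    (ε : ℝ) (hε : 0 < ε) (hεw : ∀ a, ε ≤ wts a) :
    ∀ k : ℕ, ∀ lam : ℝ, (¬ ∃ ν : Fin n → ℕ, lam = ∑ a, (ν a : ℝ) * wts a) →
    lam < k * ε →
    ∀ g : (Fin n → ℝ) → ℝ, ContDiffOn ℝ ∞ g U →
    (∀ x ∈ U, ∑ a, wts a * x a * fderiv ℝ g x (Pi.single a 1) = lam * g x) →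
    ∀ x ∈ ball (0 : Fin n → ℝ) r, g x = 0 := by
  intro k
  induction k with
  | zero =>
    intro lam hlamW hlam g hg heq x hx
    exact flow_zero wts hw U hU r hrU lam (by simpa using hlam) g hg heq hx
  | succ k ih =>
    intro lam hlamW hlam g hg heq x hx
    have hfdg : ContDiffOn ℝ ∞ (fderiv ℝ g) U :=
      ((contDiffOn_infty_iff_fderiv_of_isOpen hU).1 hg).2
    set gb : Fin n → (Fin n → ℝ) → ℝ := fun b y => fderiv ℝ g y (Pi.single b 1) with hgb_def
    have hone : (∞ : WithTop ℕ∞) ≠ 0 := by simp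
    have hgb_smooth : ∀ b, ContDiffOn ℝ ∞ (gb b) U := by
      intro b
      have h := (ContinuousLinearMap.apply ℝ ℝ (Pi.single b (1:ℝ) : Fin n → ℝ)).contDiff.comp_contDiffOn hfdg
      exact h.congr (fun y _ => rfl)
    have hdiffg : ∀ y ∈ U, DifferentiableAt ℝ g y := fun y hy =>
      (hg.contDiffAt (hU.mem_nhds hy)).differentiableAt hone
    have hdiffgb : ∀ b, ∀ y ∈ U, DifferentiableAt ℝ (gb b) y := fun b y hy =>
      ((hgb_smooth b).contDiffAt (hU.mem_nhds hy)).differentiableAt hone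
    have hdifffd : ∀ y ∈ U, DifferentiableAt ℝ (fderiv ℝ g) y := fun y hy =>
      (hfdg.contDiffAt (hU.mem_nhds hy)).differentiableAt hone
    have hsymm : ∀ y ∈ U, ∀ a b : Fin n,
        fderiv ℝ (gb a) y (Pi.single b 1) = fderiv ℝ (gb b) y (Pi.single a 1) := by
      intro y hy a b
      have hS : IsSymmSndFDerivAt ℝ g y :=
        (hg.contDiffAt (hU.mem_nhds hy)).isSymmSndFDerivAt (by
          simp only [minSmoothness_of_isRCLikeNormedField]
          rw [show ((2 : WithTop ℕ∞)) = (((2:ℕ∞) : WithTop ℕ∞)) from rfl]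
          exact WithTop.coe_le_coe.2 le_top)
      have hfun : ∀ v : Fin n → ℝ, (fun z => fderiv ℝ g z v)
          = (⇑(ContinuousLinearMap.apply ℝ ℝ v) ∘ fderiv ℝ g) := fun v => by
        funext z; rfl
      have hga : ∀ v : Fin n → ℝ, fderiv ℝ (fun z => fderiv ℝ g z v) y
          = (ContinuousLinearMap.apply ℝ ℝ v).comp (fderiv ℝ (fderiv ℝ g) y) := by
        intro v
        rw [hfun v]
        exact (((ContinuousLinearMap.apply ℝ ℝ v).hasFDerivAt).comp y
          (hdifffd y hy).hasFDerivAt).fderiv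
      show fderiv ℝ (fun z => fderiv ℝ g z (Pi.single a 1)) y (Pi.single b 1)
        = fderiv ℝ (fun z => fderiv ℝ g z (Pi.single b 1)) y (Pi.single a 1)
      rw [hga, hga]
      simpa using hS (Pi.single b 1) (Pi.single a 1)
    have hgb_eq : ∀ b, ∀ y ∈ U,
        ∑ a, wts a * y a * fderiv ℝ (gb b) y (Pi.single a 1) = (lam - wts b) * gb b y := by
      intro b y hy
      have hEE : (fun z => ∑ a, wts a * z a * gb a z) =ᶠ[𝓝 y] (fun z => lam * g z) :=
        Filter.eventually_of_mem (hU.mem_nhds hy) (fun z hz => heq z hz)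
      have hfd_eq := hEE.fderiv_eq (𝕜 := ℝ)
      have hterm : ∀ a : Fin n, HasFDerivAt (fun z : Fin n → ℝ => wts a * z a * gb a z)
          ((wts a * y a) • fderiv ℝ (gb a) y
            + gb a y • (wts a • (ContinuousLinearMap.proj a : (Fin n → ℝ) →L[ℝ] ℝ))) y := by
        intro a
        have h1 : HasFDerivAt (fun z : Fin n → ℝ => wts a * z a)
            (wts a • (ContinuousLinearMap.proj a : (Fin n → ℝ) →L[ℝ] ℝ)) y :=
          (ContinuousLinearMap.proj a : (Fin n → ℝ) →L[ℝ] ℝ).hasFDerivAt.const_mul (wts a)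
        exact h1.mul ((hdiffgb a y hy).hasFDerivAt)
      have hsum := (HasFDerivAt.fun_sum (fun a (_ : a ∈ Finset.univ) => hterm a)).fderiv
      have hrhs : fderiv ℝ (fun z => lam * g z) y = lam • fderiv ℝ g y :=
        fderiv_const_mul (hdiffg y hy) lam
      have hcomb : (∑ a, ((wts a * y a) • fderiv ℝ (gb a) y
            + gb a y • (wts a • (ContinuousLinearMap.proj a : (Fin n → ℝ) →L[ℝ] ℝ))))
          = lam • fderiv ℝ g y := by
        rw [← hrhs, ← hfd_eq]
        exact hsum.symm
      have hcv : (∑ a, ((wts a * y a) • fderiv ℝ (gb a) y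
            + gb a y • (wts a • (ContinuousLinearMap.proj a : (Fin n → ℝ) →L[ℝ] ℝ))))
            (Pi.single b 1)
          = (lam • fderiv ℝ g y) (Pi.single b 1) := by rw [hcomb]
      simp only [ContinuousLinearMap.sum_apply, ContinuousLinearMap.add_apply,
        ContinuousLinearMap.smul_apply, ContinuousLinearMap.proj_apply, smul_eq_mul] at hcv
      rw [Finset.sum_add_distrib] at hcv
      have hione : ∑ a, gb a y * (wts a * ((Pi.single b (1:ℝ) : Fin n → ℝ) a)) = gb b y * wts b := by
        rw [Finset.sum_eq_single b]
        · simp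
        · intro a _ hab
          simp [Pi.single_apply, hab]
        · intro h; exact absurd (Finset.mem_univ b) h
      rw [hione] at hcv
      have hsw : ∑ a, wts a * y a * fderiv ℝ (gb b) y (Pi.single a 1)
          = ∑ a, wts a * y a * fderiv ℝ (gb a) y (Pi.single b 1) :=
        Finset.sum_congr rfl (fun a _ => by rw [hsymm y hy a b])
      rw [hsw]
      have hgbb : fderiv ℝ g y (Pi.single b 1) = gb b y := rfl
      rw [hgbb] at hcv
      linarith
    have hgb_zero : ∀ b, ∀ y ∈ ball (0 : Fin n → ℝ) r, gb b y = 0 := by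
      intro b
      refine ih (lam - wts b) ?_ ?_ (gb b) (hgb_smooth b) (hgb_eq b)
      · rintro ⟨ν, hν⟩
        refine hlamW ⟨fun a => if a = b then ν a + 1 else ν a, ?_⟩
        have hsplit : ∀ a : Fin n, (((if a = b then ν a + 1 else ν a : ℕ)) : ℝ) * wts a
            = (ν a : ℝ) * wts a + (if a = b then wts a else 0) := by
          intro a; split <;> push_cast <;> ring
        rw [Finset.sum_congr rfl fun a _ => hsplit a, Finset.sum_add_distrib]
        simp only [Finset.sum_ite_eq', Finset.mem_univ, if_true]
        linarith
      · have := hεw b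
        push_cast at hlam ⊢
        linarith
    have hgdiffOn : DifferentiableOn ℝ g (ball (0 : Fin n → ℝ) r) := fun y hy =>
      (hdiffg y (hrU hy)).differentiableWithinAt
    have hfdw : ∀ y ∈ ball (0 : Fin n → ℝ) r,
        fderivWithin ℝ g (ball (0 : Fin n → ℝ) r) y = 0 := by
      intro y hy
      rw [fderivWithin_of_isOpen isOpen_ball hy]
      ext v
      rw [ContinuousLinearMap.zero_apply, clm_decomp]
      have hz : ∀ a : Fin n, fderiv ℝ g y (Pi.single a 1) = 0 := fun a => hgb_zero a y hy
      simp [hz]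
    have hconst := (convex_ball (0 : Fin n → ℝ) r).is_const_of_fderivWithin_eq_zero
      hgdiffOn hfdw hx (mem_ball_self hr)
    have hlam0 : lam ≠ 0 := fun h => hlamW ⟨fun _ => 0, by simp [h]⟩
    have h00 := heq 0 (hrU (mem_ball_self hr))
    simp only [Pi.zero_apply, mul_zero, zero_mul, Finset.sum_const_zero] at h00
    have hg0 : g 0 = 0 := by
      rcases mul_eq_zero.1 h00.symm with h | h
      · exact absurd h hlam0
      · exact h
    rw [hconst, hg0]

/-- If all weights `w_a` of `∇ = Σ_a w_a x^a ∂/∂x^a` are positive and `f` is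
smooth near `0` with `∇f = w·f` for a weight `w` which is not an ℕ-linear
combination of the `w_a`, then `f = 0` near `0`. -/
theorem stmt10 (n : ℕ) (wts : Fin n → ℝ) (hw : ∀ a, 0 < wts a)
    (U : Set (Fin n → ℝ)) (hU : IsOpen U) (h0 : (0 : Fin n → ℝ) ∈ U)
    (f : (Fin n → ℝ) → ℝ) (hf : ContDiffOn ℝ (⊤ : ℕ∞) f U) (w : ℝ)
    (hwW : ¬ ∃ ν : Fin n → ℕ, w = ∑ a, (ν a : ℝ) * wts a)
    (hfh : ∀ x ∈ U, ∑ a, wts a * x a * fderiv ℝ f x (Pi.single a 1) = w * f x) :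
    ∃ V : Set (Fin n → ℝ), IsOpen V ∧ (0 : Fin n → ℝ) ∈ V ∧ ∀ x ∈ V, f x = 0 := by
  obtain ⟨r, hr, hrU⟩ : ∃ r > 0, ball (0 : Fin n → ℝ) r ⊆ U :=
    Metric.mem_nhds_iff.1 (hU.mem_nhds h0)
  obtain ⟨ε, hε, hεw⟩ : ∃ ε > 0, ∀ a, ε ≤ wts a := by
    rcases isEmpty_or_nonempty (Fin n) with h | h
    · exact ⟨1, one_pos, fun a => (h.false a).elim⟩
    · refine ⟨Finset.univ.inf' Finset.univ_nonempty wts, ?_, fun a => Finset.inf'_le _ (Finset.mem_univ a)⟩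
      rw [gt_iff_lt, Finset.lt_inf'_iff]
      exact fun a _ => hw a
  obtain ⟨k, hk⟩ : ∃ k : ℕ, w < k * ε := by
    obtain ⟨k, hk⟩ := exists_nat_gt (w / ε)
    exact ⟨k, (div_lt_iff₀ hε).1 hk⟩
  exact ⟨ball 0 r, isOpen_ball, mem_ball_self hr,
    key_zero wts hw U hU r hr hrU ε hε hεw k w hwW hk f (hf.of_le (by simp)) hfh⟩
end

section
/- Let ∇ = Σ_a w_a·x^a·∂/∂x^a be a weight vector field on ℝⁿ vanishing at a point m (i.e., w_a·x^a(m) = 0 for all a), and let f be a smooth function on a neighborhood of m with ∇(f) = w·f for some w ≠ 0, whose Taylor polynomial at m is nonzero of degree r (f not flat at m modulo constants). Then w ∈ { Σ_a n_a·w_a : n_a ∈ ℕ, Σ n_a ≥ 1 }. -/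
open Filter Set Finset

section aux
variable {n : ℕ} {wts : Fin n → ℝ} {U : Set (Fin n → ℝ)}

/-- eigenfunction property passes to directional derivatives, shifting eigenvalue. -/
private lemma eigen_step (hU : IsOpen U) {g : (Fin n → ℝ) → ℝ} (hg : ContDiffOn ℝ (⊤ : ℕ∞) g U) {c : ℝ}
    (heig : ∀ x ∈ U, ∑ a, wts a * x a * fderiv ℝ g x (Pi.single a 1) = c * g x)
    (b : Fin n) :
    ∀ x ∈ U, ∑ a, wts a * x a *
        fderiv ℝ (fun y => fderiv ℝ g y (Pi.single b 1)) x (Pi.single a 1)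
      = (c - wts b) * fderiv ℝ g x (Pi.single b 1) := by
  intro x hx
  have hfd : ContDiffOn ℝ (⊤ : ℕ∞) (fderiv ℝ g) U := hg.fderiv_of_isOpen hU (by simp)
  have hfdx : DifferentiableAt ℝ (fderiv ℝ g) x :=
    (hfd.contDiffAt (hU.mem_nhds hx)).differentiableAt (by simp)
  have hDa : ∀ a : Fin n, DifferentiableAt ℝ (fun z => fderiv ℝ g z (Pi.single a 1)) x :=
    fun a => (((hfd.contDiffAt (hU.mem_nhds hx)).clm_apply contDiffAt_const)).differentiableAt (by simp)
  have hgx : DifferentiableAt ℝ g x :=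
    (hg.contDiffAt (hU.mem_nhds hx)).differentiableAt (by simp)
  have hcoord : ∀ a : Fin n, DifferentiableAt ℝ (fun y : Fin n → ℝ => wts a * y a) x := by
    intro a
    exact (ContinuousLinearMap.proj (R := ℝ) (φ := fun _ : Fin n => ℝ) a).differentiableAt.const_mul _
  have hterm : ∀ a : Fin n,
      DifferentiableAt ℝ (fun y => wts a * y a * fderiv ℝ g y (Pi.single a 1)) x :=
    fun a => (hcoord a).mul (hDa a)
  -- derivatives of both sides agree at x
  have hEq : fderiv ℝ (fun y => ∑ a, wts a * y a * fderiv ℝ g y (Pi.single a 1)) x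
      = fderiv ℝ (fun y => c * g y) x := by
    apply Filter.EventuallyEq.fderiv_eq
    exact Filter.eventuallyEq_of_mem (hU.mem_nhds hx) heig
  have hEqb := congrArg (fun L : (Fin n → ℝ) →L[ℝ] ℝ => L (Pi.single b 1)) hEq
  rw [fderiv_fun_sum (fun a _ => hterm a)] at hEqb
  rw [fderiv_const_mul hgx] at hEqb
  rw [ContinuousLinearMap.sum_apply] at hEqb
  -- symmetry of second derivative
  have hsymm : IsSymmSndFDerivAt ℝ g x :=
    (hg.contDiffAt (hU.mem_nhds hx)).isSymmSndFDerivAt (by rw [minSmoothness_of_isRCLikeNormedField]; exact WithTop.coe_le_coe.mpr (le_top : (2:ℕ∞) ≤ ⊤))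
  have hswap : ∀ a : Fin n,
      fderiv ℝ (fun y => fderiv ℝ g y (Pi.single a 1)) x (Pi.single b 1)
      = fderiv ℝ (fun y => fderiv ℝ g y (Pi.single b 1)) x (Pi.single a 1) := by
    intro a
    rw [fderiv_clm_apply hfdx (differentiableAt_const _),
        fderiv_clm_apply hfdx (differentiableAt_const _)]
    simp only [fderiv_fun_const, fderiv_const_apply, Pi.zero_apply, ContinuousLinearMap.comp_zero, zero_add,
      ContinuousLinearMap.add_apply, ContinuousLinearMap.flip_apply]
    exact hsymm _ _
  have hderiv_coord : ∀ a : Fin n,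
      fderiv ℝ (fun y : Fin n → ℝ => wts a * y a) x (Pi.single b 1)
      = wts a * (if a = b then (1:ℝ) else 0) := by
    intro a
    have : fderiv ℝ (fun y : Fin n → ℝ => wts a * y a) x
        = wts a • (ContinuousLinearMap.proj (R := ℝ) (φ := fun _ : Fin n => ℝ) a) := by
      refine HasFDerivAt.fderiv ?_
      exact ((ContinuousLinearMap.proj (R := ℝ) (φ := fun _ : Fin n => ℝ) a).hasFDerivAt).const_mul _
    rw [this]
    simp [Pi.single_apply]
  -- expand products
  have hexp : ∀ a : Fin n,
      fderiv ℝ (fun y => wts a * y a * fderiv ℝ g y (Pi.single a 1)) x (Pi.single b 1)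
      = wts a * x a * fderiv ℝ (fun y => fderiv ℝ g y (Pi.single b 1)) x (Pi.single a 1)
        + fderiv ℝ g x (Pi.single a 1) * (wts a * (if a = b then (1:ℝ) else 0)) := by
    intro a
    rw [fderiv_fun_mul (hcoord a) (hDa a)]
    simp only [ContinuousLinearMap.add_apply, ContinuousLinearMap.smul_apply, smul_eq_mul]
    rw [hswap a, hderiv_coord a]
  simp only [hexp] at hEqb
  rw [Finset.sum_add_distrib] at hEqb
  have hsum2 : ∑ a, fderiv ℝ g x (Pi.single a 1) * (wts a * (if a = b then (1:ℝ) else 0))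
      = wts b * fderiv ℝ g x (Pi.single b 1) := by
    rw [Finset.sum_eq_single b]
    · simp [mul_comm]
    · intro a _ hab; simp [hab]
    · simp
  rw [hsum2] at hEqb
  simp only [ContinuousLinearMap.smul_apply, smul_eq_mul] at hEqb
  linarith [hEqb]
end aux

section aux2
variable {n : ℕ} {U : Set (Fin n → ℝ)}

private lemma key_snoc (hU : IsOpen U) {g : (Fin n → ℝ) → ℝ} (hg : ContDiffOn ℝ (⊤ : ℕ∞) g U)
    {x : Fin n → ℝ} (hx : x ∈ U) {k : ℕ} (v : Fin k → (Fin n → ℝ)) (u : Fin n → ℝ) :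
    iteratedFDerivWithin ℝ (k+1) g U x (Fin.snoc v u)
      = iteratedFDerivWithin ℝ k (fun y => fderiv ℝ g y u) U x v := by
  have hs : UniqueDiffOn ℝ U := hU.uniqueDiffOn
  rw [iteratedFDerivWithin_succ_apply_right hs hx]
  have hc : ContDiffOn ℝ (⊤ : ℕ∞) (fderivWithin ℝ g U) U := hg.fderivWithin hs (by simp)
  rw [Fin.init_snoc, Fin.snoc_last]
  rw [← iteratedFDerivWithin_clm_apply_const_apply hs hc (by exact_mod_cast le_top) hx]
  have := iteratedFDerivWithin_congr (𝕜 := ℝ) (F := ℝ)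
      (fun y (hy : y ∈ U) => by simp only [fderivWithin_of_isOpen hU hy] :
        Set.EqOn (fun y => fderivWithin ℝ g U y u) (fun y => fderiv ℝ g y u) U) hx k
  exact DFunLike.congr_fun this v

private lemma main_ind {wts : Fin n → ℝ} {m : Fin n → ℝ} (hzero : ∀ a, wts a * m a = 0)
    (hU : IsOpen U) (hm : m ∈ U) :
    ∀ (k : ℕ) (g : (Fin n → ℝ) → ℝ) (c : ℝ), ContDiffOn ℝ (⊤ : ℕ∞) g U →
    (∀ x ∈ U, ∑ a, wts a * x a * fderiv ℝ g x (Pi.single a 1) = c * g x) →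
    ∀ d : Fin k → Fin n,
      iteratedFDerivWithin ℝ k g U m (fun i => Pi.single (d i) 1) ≠ 0 →
      ∃ ν : Fin n → ℕ, ∑ a, ν a = k ∧ c = ∑ a, (ν a : ℝ) * wts a := by
  intro k
  induction k with
  | zero =>
    intro g c hg heig d hne
    refine ⟨0, by simp, ?_⟩
    have h0 := heig m hm
    have hL : ∑ a, wts a * m a * fderiv ℝ g m (Pi.single a 1) = 0 := by
      apply Finset.sum_eq_zero
      intro a _
      rw [hzero a, zero_mul]
    rw [hL] at h0
    have hgm : g m ≠ 0 := by
      simpa [iteratedFDerivWithin_zero_apply] using hne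
    have : c = 0 := by
      rcases mul_eq_zero.1 h0.symm with h | h
      · exact h
      · exact absurd h hgm
    simp [this]
  | succ k ih =>
    intro g c hg heig d hne
    set b := d (Fin.last k) with hb
    have htup : Fin.snoc (α := fun _ : Fin (k+1) => Fin n → ℝ) (fun i : Fin k => Pi.single (d i.castSucc) (1:ℝ)) (Pi.single b (1:ℝ))
        = fun i : Fin (k+1) => Pi.single (d i) (1:ℝ) := by
      funext i
      rcases Fin.eq_castSucc_or_eq_last i with ⟨j, rfl⟩ | rfl
      · simp
      · simp [hb]
    rw [← htup, key_snoc hU hg hm] at hne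
    have hg' : ContDiffOn ℝ (⊤ : ℕ∞) (fun y => fderiv ℝ g y (Pi.single b 1)) U :=
      (hg.fderiv_of_isOpen hU (by simp)).clm_apply contDiffOn_const
    obtain ⟨ν, hν1, hν2⟩ := ih _ (c - wts b) hg' (eigen_step hU hg heig b) (fun j => d j.castSucc) hne
    refine ⟨fun a => ν a + (if a = b then 1 else 0), ?_, ?_⟩
    · rw [Finset.sum_add_distrib, hν1]
      simp
    · have : c = (c - wts b) + wts b := by ring
      rw [this, hν2]
      push_cast
      simp only [add_mul, Finset.sum_add_distrib]
      congr 1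
      simp [ite_mul, Finset.sum_ite_eq']
end aux2

/-- If `∇ = Σ_a w_a x^a ∂/∂x^a` vanishes at `m`, `f` is smooth near `m` with
`∇f = w·f`, `w ≠ 0`, and `f` is not flat at `m` modulo constants (some
iterated derivative of positive order is nonzero at `m`), then `w` is an
ℕ-linear combination `Σ_a n_a w_a` with `Σ n_a ≥ 1`. -/
theorem stmt12 (n : ℕ) (wts : Fin n → ℝ) (m : Fin n → ℝ)
    (hzero : ∀ a, wts a * m a = 0)
    (U : Set (Fin n → ℝ)) (hU : IsOpen U) (hm : m ∈ U)
    (f : (Fin n → ℝ) → ℝ) (hf : ContDiffOn ℝ (⊤ : ℕ∞) f U) (w : ℝ) (hw : w ≠ 0)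
    (hfh : ∀ x ∈ U, ∑ a, wts a * x a * fderiv ℝ f x (Pi.single a 1) = w * f x)
    (hnotflat : ∃ k : ℕ, 1 ≤ k ∧ iteratedFDeriv ℝ k f m ≠ 0) :
    ∃ ν : Fin n → ℕ, 1 ≤ ∑ a, ν a ∧ w = ∑ a, (ν a : ℝ) * wts a := by
  obtain ⟨k, hk1, hkne⟩ := hnotflat
  have hwithin : iteratedFDerivWithin ℝ k f U m ≠ 0 := by
    rwa [iteratedFDerivWithin_of_isOpen k hU hm]
  -- find a basis tuple where the derivative is nonzero
  have hexd : ∃ d : Fin k → Fin n,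
      iteratedFDerivWithin ℝ k f U m (fun i => Pi.single (d i) 1) ≠ 0 := by
    by_contra h
    push_neg at h
    apply hwithin
    have : (iteratedFDerivWithin ℝ k f U m).toMultilinearMap = (0 : MultilinearMap ℝ _ ℝ) := by
      apply Module.Basis.ext_multilinear (fun _ => Pi.basisFun ℝ (Fin n))
      intro d
      simpa [Pi.basisFun_apply] using h d
    ext v
    exact DFunLike.congr_fun this v
  obtain ⟨d, hd⟩ := hexd
  obtain ⟨ν, hν1, hν2⟩ := main_ind hzero hU hm k f w hf hfh d hd
  exact ⟨ν, by omega, hν2⟩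
end

section
/- Let ∇ = Σ_a w_a·x^a·∂/∂x^a vanish at a point m ∈ ℝⁿ (all coordinates taken to vanish at m, with w_a·x^a(m)=0). Suppose (y¹,…,yⁿ) is another smooth coordinate system near m, with y^a homogeneous of weight u_a (∇(y^a) = u_a·y^a) and dy¹ ∧ … ∧ dyⁿ ≠ 0 at m. Then the multiset {u₁,…,uₙ} equals the multiset {w₁,…,wₙ}. -/
/-- Uniqueness of weights at a zero of the weight vector field: let
`∇ = Σ_a w_a x^a ∂/∂x^a` vanish at `m` (`w_a · x^a(m) = 0` for all `a`), and
let `(y^a)` be a smooth coordinate system near `m` (invertible Jacobian at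
`m`) with each `y^a` homogeneous of weight `u_a`, i.e. `∇(y^a) = u_a · y^a`
near `m`.  Then the multiset `{u_a}` equals the multiset `{w_a}`. -/
theorem stmt19 (n : ℕ) (wts : Fin n → ℝ) (m : Fin n → ℝ)
    (hzero : ∀ a, wts a * m a = 0)
    (U : Set (Fin n → ℝ)) (hU : IsOpen U) (hm : m ∈ U)
    (y : Fin n → (Fin n → ℝ) → ℝ) (hy : ∀ a, ContDiffOn ℝ (⊤ : ℕ∞) (y a) U)
    (u : Fin n → ℝ)
    (hhom : ∀ a, ∀ x ∈ U,
      ∑ b, wts b * x b * fderiv ℝ (y a) x (Pi.single b 1) = u a * y a x)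
    (hjac : IsUnit (Matrix.det (Matrix.of
      fun a b => fderiv ℝ (y a) m (Pi.single b 1)))) :
    ∃ σ : Equiv.Perm (Fin n), ∀ a, u a = wts (σ a) := by
  set T : Fin n → Fin n → ℝ := fun a b => fderiv ℝ (y a) m (Pi.single b 1) with hT
  -- Key relation: wts b * T a b = u a * T a b
  have key : ∀ a b, wts b * T a b = u a * T a b := by
    intro a b
    have hya : ContDiffAt ℝ (⊤ : ℕ∞) (y a) m := (hy a).contDiffAt (hU.mem_nhds hm)
    have hfd : ContDiffAt ℝ (⊤ : ℕ∞) (fderiv ℝ (y a)) m := hya.fderiv_right (by simp)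
    set g : Fin n → (Fin n → ℝ) → ℝ := fun c x => fderiv ℝ (y a) x (Pi.single c 1) with hg
    have hgd : ∀ c, DifferentiableAt ℝ (g c) m := fun c =>
      (hfd.differentiableAt (by simp)).clm_apply (differentiableAt_const _)
    set G : Fin n → ((Fin n → ℝ) →L[ℝ] ℝ) := fun c => fderiv ℝ (g c) m with hG
    have hf1 : ∀ c : Fin n, HasFDerivAt (fun x : Fin n → ℝ => wts c * x c)
        (wts c • (ContinuousLinearMap.proj c : (Fin n → ℝ) →L[ℝ] ℝ)) m :=
      fun c => ((ContinuousLinearMap.proj c : (Fin n → ℝ) →L[ℝ] ℝ)).hasFDerivAt.const_mul (wts c)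
    have hprod : ∀ c : Fin n, HasFDerivAt (fun x => wts c * x c * g c x)
        ((wts c * m c) • G c + g c m • (wts c • (ContinuousLinearMap.proj c : (Fin n → ℝ) →L[ℝ] ℝ))) m :=
      fun c => (hf1 c).mul ((hgd c).hasFDerivAt)
    have hsum : HasFDerivAt (fun x => ∑ c, wts c * x c * g c x)
        (∑ c, ((wts c * m c) • G c + g c m • (wts c • (ContinuousLinearMap.proj c : (Fin n → ℝ) →L[ℝ] ℝ)))) m :=
      HasFDerivAt.fun_sum (fun c _ => hprod c)
    have heq : (fun x => u a * y a x) =ᶠ[nhds m] (fun x => ∑ c, wts c * x c * g c x) := by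
      filter_upwards [hU.mem_nhds hm] with x hx
      exact (hhom a x hx).symm
    have hR : HasFDerivAt (fun x => u a * y a x)
        (∑ c, ((wts c * m c) • G c + g c m • (wts c • (ContinuousLinearMap.proj c : (Fin n → ℝ) →L[ℝ] ℝ)))) m :=
      hsum.congr_of_eventuallyEq heq
    have hR' : HasFDerivAt (fun x => u a * y a x) (u a • fderiv ℝ (y a) m) m :=
      ((hya.differentiableAt (by simp)).hasFDerivAt).const_mul (u a)
    have hDeq := hR.unique hR'
    have := congrArg (fun (L : (Fin n → ℝ) →L[ℝ] ℝ) => L (Pi.single b 1)) hDeq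
    simp only [ContinuousLinearMap.sum_apply, ContinuousLinearMap.add_apply,
      ContinuousLinearMap.smul_apply, ContinuousLinearMap.proj_apply, smul_eq_mul] at this
    have hval : ∀ c : Fin n,
        wts c * m c * (G c) (Pi.single b 1) + g c m * (wts c * (Pi.single b 1 : Fin n → ℝ) c)
        = if c = b then wts b * g b m else 0 := by
      intro c
      rw [hzero c]
      by_cases hcb : c = b
      · subst hcb; simp [Pi.single_eq_same]; ring
      · rw [if_neg hcb]; simp [Pi.single_eq_of_ne hcb]
    rw [Finset.sum_congr rfl (fun c _ => hval c)] at this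
    simp only [Finset.sum_ite_eq', Finset.mem_univ, if_true] at this
    exact this
  -- From the determinant being a unit, find a permutation with nonzero product
  have hdet : (Matrix.of fun a b => T a b).det ≠ 0 := hjac.ne_zero
  rw [Matrix.det_apply] at hdet
  have : ∃ σ : Equiv.Perm (Fin n), ∏ i, (Matrix.of fun a b => T a b) (σ i) i ≠ 0 := by
    by_contra h
    push_neg at h
    exact hdet (Finset.sum_eq_zero fun σ _ => by rw [h σ, smul_zero])
  obtain ⟨σ, hσ⟩ := this
  refine ⟨σ⁻¹, fun a => ?_⟩
  have hne : T (σ (σ⁻¹ a)) (σ⁻¹ a) ≠ 0 := by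
    rw [Finset.prod_ne_zero_iff] at hσ
    exact hσ (σ⁻¹ a) (Finset.mem_univ _)
  rw [show σ (σ⁻¹ a) = a by simp] at hne
  have := key a (σ⁻¹ a)
  have := mul_right_cancel₀ hne (by linarith [key a (σ⁻¹ a)] : wts (σ⁻¹ a) * T a (σ⁻¹ a) = u a * T a (σ⁻¹ a))
  -- wts (σ⁻¹ a) = u a
  exact this.symm
end
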